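/- For every n ≥ 0, r̃_{Ψ,n}, viewed as a polynomial in x with coefficients in B ⊗ ℚ, has degree exactly 2gn + m in x, and its leading coefficient equals 2^{n−1} · b_m · C_{2g+2m+1,n}. -/

import Mathlib

open Polynomial

noncomputable section

/-- Index set for the variables pᵢ, qᵢ, bᵢ. -/
abbrev VarsB (g m : ℕ) := (Fin (2*g+1) ⊕ Fin (g+1)) ⊕ Fin (m+1)

/-- B = Λ[b₀,…,b_m] = ℤ[p₀,…,p_{2g},q₀,…,q_g,b₀,…,b_m]. -/
abbrev BRing (g m : ℕ) := MvPolynomial (VarsB g m) ℤ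

/-- B ⊗ ℚ. -/
abbrev BQ (g m : ℕ) := MvPolynomial (VarsB g m) ℚ

/-- 𝗉(x) ∈ B[x]. -/
def pB (g m : ℕ) : Polynomial (BRing g m) :=
  X ^ (2*g+1) + ∑ i : Fin (2*g+1), C (MvPolynomial.X (Sum.inl (Sum.inl i))) * X ^ (i : ℕ)

/-- 𝗊(x) ∈ B[x]. -/
def qB (g m : ℕ) : Polynomial (BRing g m) :=
  ∑ i : Fin (g+1), C (MvPolynomial.X (Sum.inl (Sum.inr i))) * X ^ (i : ℕ)

/-- Ψ(x) = b₀ + b₁x + ⋯ + b_mx^m ∈ B[x]. -/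
def PsiB (g m : ℕ) : Polynomial (BRing g m) :=
  ∑ i : Fin (m+1), C (MvPolynomial.X (Sum.inr i)) * X ^ (i : ℕ)

/-- 𝗉(x) ∈ (B⊗ℚ)[x]. -/
def pBQ (g m : ℕ) : Polynomial (BQ g m) :=
  X ^ (2*g+1) + ∑ i : Fin (2*g+1), C (MvPolynomial.X (Sum.inl (Sum.inl i))) * X ^ (i : ℕ)

/-- 𝗊(x) ∈ (B⊗ℚ)[x]. -/
def qBQ (g m : ℕ) : Polynomial (BQ g m) :=
  ∑ i : Fin (g+1), C (MvPolynomial.X (Sum.inl (Sum.inr i))) * X ^ (i : ℕ)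

/-- 𝖿(x) = 𝗉(x) + 𝗊(x)²/4 ∈ (B⊗ℚ)[x]. -/
def fBQ (g m : ℕ) : Polynomial (BQ g m) :=
  pBQ g m + C (MvPolynomial.C ((4:ℚ)⁻¹)) * qBQ g m ^ 2

/-- The evaluation map (B⊗ℚ)[x] → L extending φ : B[x] → L. -/
def psiB (g m : ℕ) (L : Type) [Field L] [CharZero L]
    (φ : Polynomial (BRing g m) →+* L) : Polynomial (BQ g m) →+* L :=
  Polynomial.eval₂RingHom
    (MvPolynomial.eval₂Hom (Rat.castHom L)
      (fun v => φ (Polynomial.C (MvPolynomial.X v)))) (φ Polynomial.X)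

/-- r̃_{Ψ,n} = (2z)^{2n−1}·D₁ⁿ(Ψ(x)z) ∈ L, where z = y + 𝗊(x)/2. -/
def rtB (g m : ℕ) (L : Type) [Field L]
    (φ : Polynomial (BRing g m) →+* L) (y : L) (D : L → L) (n : ℕ) : L :=
  (2 * (y + φ (qB g m) / 2)) ^ (2*(n:ℤ) - 1)
    * D^[n] (φ (PsiB g m) * (y + φ (qB g m) / 2))

/-- C_{m,n} = ∏_{r=0}^{n−1} (m − 2r). -/
def CcB (m : ℤ) (n : ℕ) : ℤ := ∏ r ∈ Finset.range n, (m - 2*(r : ℤ))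

/-!
Put `w = 2z`, so that `w² = 4𝖿(x)` and hence `w · D₁w = 2𝖿'(x)`. By induction,
`D₁ⁿ(S₀(x) w) = Sₙ(x) w^(1-2n)` with `S_{n+1} = 4𝖿 Sₙ' + 2(1-2n) 𝖿' Sₙ`; taking `S₀ = Ψ/2` gives
`r̃_{Ψ,n} = Sₙ(x)`, and `Sₙ` is the only such polynomial because `(B ⊗ ℚ)[x]` embeds in `L_B`.
Since `𝖿` is monic of degree `2g+1`, if `Sₙ` has degree `≤ d` with `x^d`-coefficient `c`, then
`S_{n+1}` has degree `≤ d + 2g` with coefficient `(4d + 2(1-2n)(2g+1)) c`, which for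
`d = 2gn + m` is `2(2g+2m+1-2n) c`. The product `C_{2g+2m+1,n}` of odd integers never vanishes.
-/

namespace Polynomial

variable {R : Type*} [CommRing R]

theorem coeff_X_mul_derivative (P : R[X]) (j : ℕ) :
    (X * derivative P).coeff j = j * P.coeff j := by
  cases j with
  | zero => simp
  | succ j => rw [coeff_X_mul, coeff_derivative]; push_cast; ring

theorem natDegree_X_mul_derivative_le {P : R[X]} {d : ℕ} (hP : P.natDegree ≤ d) :
    (X * derivative P).natDegree ≤ d := by
  refine natDegree_le_iff_coeff_eq_zero.mpr fun j hj => ?_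
  rw [coeff_X_mul_derivative, coeff_eq_zero_of_natDegree_lt (hP.trans_lt (mod_cast hj)),
    mul_zero]

variable {F P : R[X]} {k d : ℕ}

/- Going through `X * P'`, of degree `≤ d`, avoids the truncated bound `d - 1` on `P'`. -/
theorem natDegree_mul_derivative_le (hF : F.natDegree ≤ k + 1) (hP : P.natDegree ≤ d) :
    (F * derivative P).natDegree ≤ k + d := by
  refine natDegree_le_iff_coeff_eq_zero.mpr fun j hj => ?_
  have hdeg : (F * (X * derivative P)).natDegree < j + 1 :=
    (natDegree_mul_le_of_le hF (natDegree_X_mul_derivative_le hP)).trans_lt (by omega)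
  rw [← coeff_X_mul, ← mul_left_comm, coeff_eq_zero_of_natDegree_lt hdeg]

theorem coeff_mul_derivative (hF : F.natDegree ≤ k + 1) (hP : P.natDegree ≤ d) :
    (F * derivative P).coeff (k + d) = d * F.coeff (k + 1) * P.coeff d := by
  rw [← coeff_X_mul, ← mul_left_comm, show k + d + 1 = (k + 1) + d by ring,
    coeff_mul_add_eq_of_natDegree_le hF (natDegree_X_mul_derivative_le hP),
    coeff_X_mul_derivative]
  ring

theorem natDegree_derivative_mul_le (hF : F.natDegree ≤ k + 1) (hP : P.natDegree ≤ d) :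
    (derivative F * P).natDegree ≤ k + d :=
  natDegree_mul_le_of_le ((natDegree_derivative_le F).trans (by omega)) hP

theorem coeff_derivative_mul (hF : F.natDegree ≤ k + 1) (hP : P.natDegree ≤ d) :
    (derivative F * P).coeff (k + d) = (k + 1) * F.coeff (k + 1) * P.coeff d := by
  rw [coeff_mul_add_eq_of_natDegree_le ((natDegree_derivative_le F).trans (by omega)) hP,
    coeff_derivative]
  ring

theorem natDegree_sum_fin_le (c : Fin (k + 1) → R) :
    (∑ i : Fin (k + 1), C (c i) * X ^ (i : ℕ)).natDegree ≤ k :=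
  natDegree_le_of_degree_le (Order.le_of_lt_succ (degree_sum_fin_lt c))

theorem coeff_sum_fin_last (c : Fin (k + 1) → R) :
    (∑ i : Fin (k + 1), C (c i) * X ^ (i : ℕ)).coeff k = c (Fin.last k) := by
  simp [finsetSum_coeff, Fin.sum_univ_castSucc, (Fin.is_lt _).ne']

section Localization

attribute [local instance] MvPolynomial.algebraMvPolynomial Polynomial.algebra

theorem injective_of_injective_comp_mapRingHom_intCast {σ A : Type*} [CommRing A]
    (ψ : (MvPolynomial σ ℚ)[X] →+* A)
    (h : Function.Injective (ψ.comp (mapRingHom (MvPolynomial.map (Int.castRingHom ℚ))))) :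
    Function.Injective ψ := by
  let M := ((nonZeroDivisors ℤ).map (MvPolynomial.C (σ := σ))).map (C (R := MvPolynomial σ ℤ))
  have : IsLocalization M (MvPolynomial σ ℚ)[X] := Polynomial.isLocalization _ _
  exact (IsLocalization.injective_iff_map_algebraMap_eq M ψ).mpr fun _ _ =>
    ⟨congrArg ψ, fun hPQ => congrArg _ (h hPQ)⟩

end Localization

end Polynomial

theorem CcB_succ (M : ℤ) (n : ℕ) : CcB M (n + 1) = CcB M n * (M - 2 * n) :=
  Finset.prod_range_succ _ _

theorem CcB_ne_zero_of_odd {M : ℤ} (hM : Odd M) (n : ℕ) : CcB M n ≠ 0 :=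
  Finset.prod_ne_zero_iff.mpr fun r _ h => by
    obtain ⟨j, rfl⟩ := hM
    omega

section rtPoly

variable {R : Type*} [CommRing R]

/-- If `w² = 4 F(x)` and `D` is a derivation with `D x = 1`, then
`Dⁿ (S₀(x) w) = (rtPoly F S₀ n)(x) · w^(1 - 2n)`. -/
def rtPoly (F S₀ : R[X]) : ℕ → R[X]
  | 0 => S₀
  | n + 1 => C 4 * (F * derivative (rtPoly F S₀ n))
      + C (2 * (1 - 2 * (n : R))) * (derivative F * rtPoly F S₀ n)

theorem natDegree_rtPoly_le_and_coeff {F S₀ : R[X]} {k d : ℕ} (hF : F.Monic)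
    (hFdeg : F.natDegree = k + 1) (hS : S₀.natDegree ≤ d) (n : ℕ) :
    (rtPoly F S₀ n).natDegree ≤ k * n + d ∧
      (rtPoly F S₀ n).coeff (k * n + d) = 2 ^ n * (CcB (k + 2 * d + 1) n : R) * S₀.coeff d := by
  induction n with
  | zero => simpa [rtPoly, CcB] using hS
  | succ n ih =>
    obtain ⟨hdeg, hcoeff⟩ := ih
    have hF' : F.natDegree ≤ k + 1 := hFdeg.le
    have hFk : F.coeff (k + 1) = 1 := hFdeg ▸ hF.coeff_natDegree
    rw [show k * (n + 1) + d = k + (k * n + d) by ring, rtPoly]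
    refine ⟨natDegree_add_le_of_degree_le ?_ ?_, ?_⟩
    · exact (natDegree_C_mul_le _ _).trans (natDegree_mul_derivative_le hF' hdeg)
    · exact (natDegree_C_mul_le _ _).trans (natDegree_derivative_mul_le hF' hdeg)
    · rw [coeff_add, coeff_C_mul, coeff_C_mul, coeff_mul_derivative hF' hdeg,
        coeff_derivative_mul hF' hdeg, hFk, hcoeff, CcB_succ]
      push_cast
      ring

end rtPoly

def derivationOfLeibniz {A : Type*} [CommRing A] [Algebra ℚ A] (D : A → A)
    (hadd : ∀ a b, D (a + b) = D a + D b) (hmul : ∀ a b, D (a * b) = a * D b + D a * b) :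
    Derivation ℚ A A :=
  Derivation.mk' (AddMonoidHom.mk' D hadd).toRatLinearMap fun a b => by
    simp [hmul, mul_comm]

theorem coe_derivationOfLeibniz {A : Type*} [CommRing A] [Algebra ℚ A] (D : A → A)
    (hadd : ∀ a b, D (a + b) = D a + D b) (hmul : ∀ a b, D (a * b) = a * D b + D a * b) :
    ⇑(derivationOfLeibniz D hadd hmul) = D :=
  rfl

namespace Derivation

theorem map_ringHom_polynomial {R A S : Type*} [CommRing R] [CommRing A] [Algebra R A]
    [CommRing S] (D : Derivation R A A) (ψ : S[X] →+* A) (hC : ∀ s, D (ψ (C s)) = 0)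
    (P : S[X]) : D (ψ P) = ψ (derivative P) * D (ψ X) := by
  induction P using Polynomial.induction_on with
  | C s => simp [hC]
  | add P Q hP hQ => simp [hP, hQ, add_mul]
  | monomial n s _ =>
    simp only [map_mul, map_pow, leibniz, leibniz_pow, add_tsub_cancel_right, smul_eq_mul,
      nsmul_eq_mul, Nat.cast_add, Nat.cast_one, hC, mul_zero, add_zero, derivative_mul,
      derivative_C, zero_mul, derivative_X_pow_succ, map_add, _root_.map_natCast, map_one, zero_add]
    ring

theorem map_ringHom_mvPolynomial_eq_zero {σ A : Type*} [CommRing A] [Algebra ℚ A]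
    (D : Derivation ℚ A A) (ρ : MvPolynomial σ ℚ →+* A)
    (hX : ∀ i, D (ρ (MvPolynomial.X i)) = 0) (a : MvPolynomial σ ℚ) : D (ρ a) = 0 := by
  induction a using MvPolynomial.induction_on with
  | C q =>
    rw [show ρ (MvPolynomial.C q) = algebraMap ℚ A q from
      RingHom.congr_fun (RingHom.ext_rat (ρ.comp MvPolynomial.C) (algebraMap ℚ A)) q]
    exact D.map_algebraMap q
  | add a b ha hb => rw [map_add, map_add, ha, hb, add_zero]
  | mul_X a i ha => rw [map_mul, leibniz, ha, hX, smul_zero, smul_zero, add_zero]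

variable {K R : Type*} [Field K] [CharZero K] [CommRing R] (D : Derivation ℚ K K)
  {ψ : R[X] →+* K} {F : R[X]} {w : K}

theorem iterate_map_mul_eq_rtPoly (hψ : ∀ P, D (ψ P) = ψ (derivative P)) (hw : w ≠ 0)
    (hw2 : w ^ 2 = 4 * ψ F) (S₀ : R[X]) (n : ℕ) :
    D^[n] (ψ S₀ * w) = ψ (rtPoly F S₀ n) * w ^ (1 - 2 * (n : ℤ)) := by
  have hwD : w * D w = 2 * ψ (derivative F) := by
    have h := congrArg D hw2
    rw [leibniz_pow, leibniz, hψ, show (4 : K) = ((4 : ℕ) : K) by norm_num, map_natCast] at h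
    simp only [nsmul_eq_mul, smul_eq_mul] at h
    linear_combination h / 2
  induction n with
  | zero => simp [rtPoly]
  | succ n ih =>
    set e : ℤ := 1 - 2 * n
    have hwe : w ^ e = w ^ (e - 2) * w ^ 2 := by
      rw [← zpow_natCast, ← zpow_add₀ hw]; norm_num
    have hwe1 : w ^ (e - 1) = w ^ (e - 2) * w := by
      rw [← zpow_add_one₀ hw]; ring_nf
    rw [Function.iterate_succ_apply', ih, leibniz, leibniz_zpow, hψ, rtPoly,
      show 1 - 2 * ((n + 1 : ℕ) : ℤ) = e - 2 by push_cast; ring, hwe, hwe1]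
    have hn : ψ (C (n : R)) = n := by simp
    simp only [smul_eq_mul, zsmul_eq_mul, map_add, map_mul, map_sub, hn, map_ofNat, map_one]
    have he : (e : K) = 1 - 2 * n := by push_cast [e]; ring
    rw [he]
    linear_combination (w ^ (e - 2) * ψ (derivative (rtPoly F S₀ n))) * hw2
      + ((1 - 2 * (n : K)) * w ^ (e - 2) * ψ (rtPoly F S₀ n)) * hwD

end Derivation

variable {g m : ℕ}

theorem fBQ_eq_map :
    fBQ g m = (pB g m).map (MvPolynomial.map (Int.castRingHom ℚ))
      + C (MvPolynomial.C 4⁻¹) * ((qB g m).map (MvPolynomial.map (Int.castRingHom ℚ))) ^ 2 := by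
  simp [fBQ, pBQ, qBQ, pB, qB, Polynomial.map_sum]

theorem fBQ_monic_and_natDegree : (fBQ g m).Monic ∧ (fBQ g m).natDegree = 2 * g + 1 := by
  have hlow : (∑ i : Fin (2 * g + 1), C (MvPolynomial.X (Sum.inl (Sum.inl i))) * X ^ (i : ℕ)
      : Polynomial (BQ g m)).degree < (X ^ (2 * g + 1) : Polynomial (BQ g m)).degree := by
    rw [degree_X_pow]; exact degree_sum_fin_lt _
  have hp : (pBQ g m).Monic := (monic_X_pow _).add_of_left hlow
  have hpdeg : (pBQ g m).natDegree = 2 * g + 1 := by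
    rw [pBQ, natDegree_add_eq_left_of_degree_lt hlow, natDegree_X_pow]
  have hq : (C (MvPolynomial.C (4:ℚ)⁻¹) * qBQ g m ^ 2).degree < (pBQ g m).degree := by
    refine degree_lt_degree ((natDegree_C_mul_le _ _).trans_lt ?_)
    have := natDegree_sum_fin_le
      (fun i : Fin (g + 1) => MvPolynomial.X (R := ℚ) (Sum.inl (Sum.inr i) : VarsB g m))
    have := natDegree_pow_le (p := qBQ g m) (n := 2)
    rw [hpdeg, qBQ] at *
    omega
  exact ⟨hp.add_of_left hq, (natDegree_add_eq_left_of_degree_lt hq).trans hpdeg⟩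

def halfPsiBQ (g m : ℕ) : Polynomial (BQ g m) :=
  C (MvPolynomial.C 2⁻¹) * (PsiB g m).map (MvPolynomial.map (Int.castRingHom ℚ))

theorem natDegree_halfPsiBQ_le : (halfPsiBQ g m).natDegree ≤ m :=
  (natDegree_C_mul_le _ _).trans <| natDegree_map_le.trans (natDegree_sum_fin_le _)

theorem coeff_halfPsiBQ :
    (halfPsiBQ g m).coeff m = MvPolynomial.C 2⁻¹ * MvPolynomial.X (Sum.inr (Fin.last m)) := by
  rw [halfPsiBQ, coeff_C_mul, coeff_map, PsiB, coeff_sum_fin_last, MvPolynomial.map_X]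

section psiB

variable {L : Type} [Field L] [CharZero L] (φ : Polynomial (BRing g m) →+* L)

theorem psiB_C_C (q : ℚ) : psiB g m L φ (C (MvPolynomial.C q)) = q := by
  simp [psiB]

theorem psiB_X : psiB g m L φ X = φ X := by
  simp [psiB]

theorem psiB_comp_mapRingHom :
    (psiB g m L φ).comp (mapRingHom (MvPolynomial.map (Int.castRingHom ℚ))) = φ := by
  refine Polynomial.ringHom_ext (fun a => ?_) (by simp [psiB_X])
  induction a using MvPolynomial.induction_on with
  | C z => simp [← MvPolynomial.algebraMap_eq]
  | add a b ha hb => simp_all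
  | mul_X a i ha => simp_all [psiB]

theorem psiB_map (P : Polynomial (BRing g m)) :
    psiB g m L φ (P.map (MvPolynomial.map (Int.castRingHom ℚ))) = φ P :=
  RingHom.congr_fun (psiB_comp_mapRingHom φ) P

theorem psiB_injective (hinj : Function.Injective φ) : Function.Injective (psiB g m L φ) :=
  injective_of_injective_comp_mapRingHom_intCast _ (by rwa [psiB_comp_mapRingHom])

theorem psiB_fBQ : psiB g m L φ (fBQ g m) = φ (pB g m) + φ (qB g m) ^ 2 / 4 := by
  rw [fBQ_eq_map, map_add, map_mul, map_pow, psiB_map, psiB_map, psiB_C_C]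
  push_cast
  ring

theorem Derivation.map_psiB (D : Derivation ℚ L L) (hDx : D (φ X) = 1)
    (hDc : ∀ c, D (φ (C c)) = 0) (P : Polynomial (BQ g m)) :
    D (psiB g m L φ P) = psiB g m L φ (derivative P) := by
  have hconst (a : BQ g m) : D (psiB g m L φ (C a)) = 0 :=
    D.map_ringHom_mvPolynomial_eq_zero ((psiB g m L φ).comp C)
      (fun i => by simpa [psiB] using hDc (MvPolynomial.X i)) a
  rw [D.map_ringHom_polynomial _ hconst, psiB_X, hDx, mul_one]

theorem rtB_eq_psiB_rtPoly (hinj : Function.Injective φ) {y : L}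
    (hy : y ^ 2 + φ (qB g m) * y = φ (pB g m)) {D : L → L}
    (hDadd : ∀ a b : L, D (a + b) = D a + D b) (hDmul : ∀ a b : L, D (a * b) = a * D b + D a * b)
    (hDx : D (φ X) = 1) (hDc : ∀ c : BRing g m, D (φ (C c)) = 0) (n : ℕ) :
    rtB g m L φ y D n = psiB g m L φ (rtPoly (fBQ g m) (halfPsiBQ g m) n) := by
  set z := y + φ (qB g m) / 2 with hz_def
  have hz : z ^ 2 = psiB g m L φ (fBQ g m) := by
    rw [psiB_fBQ]
    linear_combination hy
  have hw : 2 * z ≠ 0 := fun h0 => fBQ_monic_and_natDegree.1.ne_zero <| psiB_injective φ hinj <| by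
    rw [map_zero, ← hz, show z = 0 by simpa using h0, zero_pow two_ne_zero]
  have hstart : φ (PsiB g m) * z = psiB g m L φ (halfPsiBQ g m) * (2 * z) := by
    rw [halfPsiBQ, map_mul, psiB_map, psiB_C_C]
    push_cast
    ring
  rw [rtB, ← hz_def, hstart, ← coe_derivationOfLeibniz D hDadd hDmul,
    Derivation.iterate_map_mul_eq_rtPoly _ (Derivation.map_psiB φ _ hDx hDc) hw
      (F := fBQ g m) (by rw [mul_pow, hz]; norm_num),
    mul_left_comm, ← zpow_add₀ hw]
  simp

end psiB

theorem natDegree_rtPoly_fBQ_le_and_coeff (n : ℕ) :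
    (rtPoly (fBQ g m) (halfPsiBQ g m) n).natDegree ≤ 2 * g * n + m ∧
      (rtPoly (fBQ g m) (halfPsiBQ g m) n).coeff (2 * g * n + m)
        = MvPolynomial.C ((2:ℚ)^((n:ℤ)-1) * (CcB (2*(g:ℤ)+2*(m:ℤ)+1) n : ℚ))
          * MvPolynomial.X (Sum.inr (Fin.last m)) := by
  obtain ⟨hle, hcoeff⟩ := natDegree_rtPoly_le_and_coeff fBQ_monic_and_natDegree.1
    fBQ_monic_and_natDegree.2 natDegree_halfPsiBQ_le n
  refine ⟨hle, ?_⟩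
  rw [hcoeff, coeff_halfPsiBQ, zpow_sub_one₀ two_ne_zero, zpow_natCast,
    show ((2 * g : ℕ) : ℤ) + 2 * m + 1 = 2 * g + 2 * m + 1 by push_cast; ring]
  simp only [map_mul, map_pow, map_intCast, map_ofNat]
  ring

theorem stmt16_general (g m : ℕ)
    (L : Type) [Field L] [CharZero L]
    (φ : Polynomial (BRing g m) →+* L) (y : L) (D : L → L)
    (hinj : Function.Injective φ)
    (hy : y ^ 2 + φ (qB g m) * y = φ (pB g m))
    (hDadd : ∀ a b : L, D (a + b) = D a + D b)
    (hDmul : ∀ a b : L, D (a * b) = a * D b + D a * b)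
    (hDx : D (φ X) = 1)
    (hDc : ∀ c : BRing g m, D (φ (C c)) = 0) :
    ∀ (rp : Polynomial (BQ g m)) (n : ℕ), psiB g m L φ rp = rtB g m L φ y D n →
      rp.degree = ((2*g*n + m : ℕ) : WithBot ℕ) ∧
      rp.leadingCoeff
        = MvPolynomial.C ((2:ℚ)^((n:ℤ)-1) * (CcB (2*(g:ℤ)+2*(m:ℤ)+1) n : ℚ))
          * MvPolynomial.X (Sum.inr (Fin.last m)) := by
  intro rp n h
  obtain rfl := psiB_injective φ hinj (h.trans (rtB_eq_psiB_rtPoly φ hinj hy hDadd hDmul hDx hDc n))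
  obtain ⟨hle, hcoeff⟩ := natDegree_rtPoly_fBQ_le_and_coeff (g := g) (m := m) n
  have hne : (rtPoly (fBQ g m) (halfPsiBQ g m) n).coeff (2 * g * n + m) ≠ 0 := by
    rw [hcoeff]
    refine mul_ne_zero (MvPolynomial.C_ne_zero.mpr (mul_ne_zero (zpow_ne_zero _ two_ne_zero) ?_))
      (MvPolynomial.X_ne_zero _)
    exact_mod_cast CcB_ne_zero_of_odd ⟨g + m, by push_cast; ring⟩ n
  exact ⟨degree_eq_of_le_of_coeff_ne_zero (natDegree_le_iff_degree_le.mp hle) hne,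
    by rw [leadingCoeff, natDegree_eq_of_le_of_coeff_ne_zero hle hne, hcoeff]⟩

/-- r̃_{Ψ,n}, viewed as a polynomial in x over B⊗ℚ, has degree exactly
2gn+m and leading coefficient 2^{n−1}·b_m·C_{2g+2m+1,n}. -/
theorem stmt16 (g m : ℕ) (hg : 1 ≤ g)
    (L : Type) [Field L] [CharZero L]
    (φ : Polynomial (BRing g m) →+* L) (y : L) (D : L → L)
    (hinj : Function.Injective φ)
    (hy : y ^ 2 + φ (qB g m) * y = φ (pB g m))
    (hind : ∀ u v : Polynomial (BRing g m), φ v * y = φ u → v = 0)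
    (hDadd : ∀ a b : L, D (a + b) = D a + D b)
    (hDmul : ∀ a b : L, D (a * b) = a * D b + D a * b)
    (hDx : D (φ X) = 1)
    (hDc : ∀ c : BRing g m, D (φ (C c)) = 0) :
    ∀ (rp : Polynomial (BQ g m)) (n : ℕ), psiB g m L φ rp = rtB g m L φ y D n →
      rp.degree = ((2*g*n + m : ℕ) : WithBot ℕ) ∧
      rp.leadingCoeff
        = MvPolynomial.C ((2:ℚ)^((n:ℤ)-1) * (CcB (2*(g:ℤ)+2*(m:ℤ)+1) n : ℚ))
          * MvPolynomial.X (Sum.inr (Fin.last m)) :=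
  stmt16_general g m L φ y D hinj hy hDadd hDmul hDx hDc
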